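/- Let K be a perfectoid field with tilt K^♭ and sharp map ♯: K^♭ → K, (x_n) ↦ x_0. Then the map v^♭(x) := v(x^♯) defines a valuation on K^♭, and the value group of v^♭ equals the value group of v. -/

import Mathlib

set_option synthInstance.maxHeartbeats 1000000

open Filter

/-- The underlying set of the tilt of `K`: sequences `(x_n)` in `K` with `x_{n+1}^p = x_n`. -/
def TiltCarrier (K : Type*) [Field K] (p : ℕ) : Type _ :=
  {f : ℕ → K // ∀ n, f (n + 1) ^ p = f n}

/-- A field structure on the tilt with coordinatewise multiplication, the limit formula for
addition, characteristic `p` and bijective Frobenius. -/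
def TiltFieldSpec (K : Type*) [Field K] [Valued K NNReal] (p : ℕ)
    (F : Field (TiltCarrier K p)) : Prop :=
  letI := F
  (∀ a b : TiltCarrier K p, (a * b).val = fun n => a.val n * b.val n) ∧
  (∀ a b : TiltCarrier K p, ∀ n : ℕ,
    Tendsto (fun m : ℕ => (a.val (n + m) + b.val (n + m)) ^ p ^ m) atTop
      (nhds ((a + b).val n))) ∧
  CharP (TiltCarrier K p) p ∧
  Function.Bijective (fun x : TiltCarrier K p => x ^ p)

/-- The assertion that `v^♭(x) := v(x^♯)` (where `♯` is the projection onto the zeroth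
coordinate) is a valuation on the tilt whose value group coincides with that of `v`. -/
def SharpValuationSpec (K : Type*) [Field K] [Valued K NNReal] (p : ℕ)
    (F : Field (TiltCarrier K p)) : Prop :=
  letI := F
  ∃ w : Valuation (TiltCarrier K p) NNReal,
    (∀ x : TiltCarrier K p, w x = Valued.v (x.val 0)) ∧
    (Set.range fun x : (TiltCarrier K p)ˣ => w (x : TiltCarrier K p)) =
      (Set.range fun x : Kˣ => Valued.v (x : K))

/-!
Multiplication on the tilt is coordinatewise, so `♯ : x ↦ x₀` is multiplicative, and since
`v(x₀) = v(xₘ)^(pᵐ)` the limit formula for the addition carries the ultrametric inequality of `v`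
at level `m` over to `v^♭ = v ∘ ♯`.

For the value groups, surjectivity of Frobenius on `𝒪/p` lifts any `a` with `v p < v a ≤ 1` to
a sequence `aₙ` with `aₙ₊₁^p ≡ aₙ (mod p)`. Since `a ≡ b (mod p)` implies
`a^(pᵐ) ≡ b^(pᵐ) (mod p^(m+1))`, the limits `xₙ = lim_m aₙ₊ₘ^(pᵐ)` exist, form a tilt
element, and `x₀ ≡ a (mod p)`, so `v(x₀) = v a`. Density gives `e` with `v p < v e < 1`, and
every value `v c` is an integral power of `v e` times a value in `(v e, 1]`.
-/

open Topology

theorem dvd_pow_pow_sub_pow_pow {R : Type*} [CommRing R] {p : ℕ} {f : ℕ → R}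
    (hf : ∀ n, (p : R) ∣ f (n + 1) ^ p - f n) {m m' : ℕ} (h : m ≤ m') :
    (p : R) ^ (m + 1) ∣ f m' ^ p ^ m' - f m ^ p ^ m := by
  induction m', h using Nat.le_induction with
  | base => simp
  | succ k hmk ih =>
    have hstep : (p : R) ^ (k + 1) ∣ f (k + 1) ^ p ^ (k + 1) - f k ^ p ^ k := by
      rw [pow_succ' p k, pow_mul]
      exact dvd_sub_pow_of_dvd_sub (hf k) k
    rw [← sub_add_sub_cancel]
    exact dvd_add ((pow_dvd_pow _ (by omega)).trans hstep) ih

theorem exists_seq_dvd_pow_sub {R : Type*} [CommRing R] {p : ℕ}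
    (hfrob : ∀ x : R ⧸ Ideal.span {(p : R)}, ∃ y, y ^ p = x) (a : R) :
    ∃ f : ℕ → R, f 0 = a ∧ ∀ n, (p : R) ∣ f (n + 1) ^ p - f n := by
  have hroot : ∀ b : R, ∃ c, (p : R) ∣ c ^ p - b := fun b => by
    obtain ⟨y, hy⟩ := hfrob (Ideal.Quotient.mk _ b)
    obtain ⟨c, rfl⟩ := Ideal.Quotient.mk_surjective y
    rw [← map_pow, Ideal.Quotient.eq, Ideal.mem_span_singleton] at hy
    exact ⟨c, hy⟩
  choose g hg using hroot
  exact ⟨fun n => g^[n] a, rfl, fun n => by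
    simp only [Function.iterate_succ_apply']
    exact hg _⟩

theorem exists_mul_zpow_mem_Ioc {α : Type*} [Semifield α] [LinearOrder α]
    [IsStrictOrderedRing α] [Archimedean α] [ExistsAddOfLE α] {e x : α} (he0 : 0 < e)
    (he1 : e < 1) (hx : 0 < x) :
    ∃ n : ℤ, x * e ^ n ∈ Set.Ioc e 1 := by
  obtain ⟨n, hlow, hup⟩ := exists_mem_Ioc_zpow hx (one_lt_inv₀ he0 |>.2 he1)
  have hpos : 0 < e ^ (n + 1) := zpow_pos he0 _
  refine ⟨n + 1, ?_, ?_⟩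
  · calc e = e⁻¹ ^ n * e ^ (n + 1) := by
          rw [inv_zpow, zpow_add_one₀ he0.ne', inv_mul_cancel_left₀ (zpow_ne_zero _ he0.ne')]
      _ < x * e ^ (n + 1) := mul_lt_mul_of_pos_right hlow hpos
  · calc x * e ^ (n + 1) ≤ e⁻¹ ^ (n + 1) * e ^ (n + 1) :=
          mul_le_mul_of_nonneg_right hup hpos.le
      _ = 1 := by rw [inv_zpow, inv_mul_cancel₀ hpos.ne']

namespace Valued

variable {R : Type*} [Ring R]

theorem isClosed_setOf_v_le {Γ₀ : Type*} [LinearOrderedCommGroupWithZero Γ₀] [Valued R Γ₀]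
    (r : Γ₀) : IsClosed {x : R | v x ≤ r} := by
  rw [← isOpen_compl_iff, isOpen_iff_mem_nhds]
  intro x hx
  have hrx : r < v x := not_le.mp hx
  filter_upwards [locally_const (zero_le.trans_lt hrx).ne'] with y hy
  simpa [Set.mem_ofPred_eq, hy] using hrx

theorem cauchySeq_of_v_sub_le [Valued R NNReal] {s : ℕ → R} {c : ℕ → NNReal}
    (hc : Tendsto c atTop (𝓝 0)) (hs : ∀ m m', m ≤ m' → v (s m' - s m) ≤ c m) :
    CauchySeq s := by
  rw [(hasBasis_uniformity R NNReal).cauchySeq_iff]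
  rintro γ -
  obtain ⟨N, hN⟩ := eventually_atTop.mp
    (hc.eventually (gt_mem_nhds (MonoidWithZeroHom.ValueGroup₀.embedding_unit_pos γ)))
  refine ⟨N, fun m hm m' hm' => ?_⟩
  rw [Set.mem_ofPred_eq, Valuation.restrict_lt_iff_lt_embedding]
  rcases le_total m m' with h | h
  · exact (hs m m' h).trans_lt (hN m hm)
  · rw [Valuation.map_sub_swap]
    exact (hs m' m h).trans_lt (hN m' hm')

variable {K : Type*} [Field K] [Valued K NNReal]

local notation "𝒪" => (Valued.v.valuationSubring : ValuationSubring K)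

theorem v_natCast_lt_one (p : ℕ) [CharP (IsLocalRing.ResidueField 𝒪) p] : v (p : K) < 1 := by
  have hmax : (p : 𝒪) ∈ IsLocalRing.maximalIdeal 𝒪 := by
    rw [← IsLocalRing.residue_eq_zero_iff, map_natCast]
    exact CharP.cast_eq_zero _ p
  refine lt_of_le_of_ne (p : 𝒪).2 fun h => hmax ?_
  have hp : (p : K) ≠ 0 := fun h0 => by simp [h0] at h
  exact (Valuation.valuationSubring.integers v).isUnit_of_one (Ne.isUnit hp) h

end Valued

namespace TiltCarrier

variable {K : Type*} [Field K] {p : ℕ}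

theorem val_add_pow (x : TiltCarrier K p) (n m : ℕ) : x.val (n + m) ^ p ^ m = x.val n := by
  induction m with
  | zero => simp
  | succ m ih => rw [← add_assoc, pow_succ', pow_mul, x.2, ih]

theorem val_pow (x : TiltCarrier K p) (n : ℕ) : x.val n ^ p ^ n = x.val 0 := by
  simpa using x.val_add_pow 0 n

theorem val_eq_zero (hp : p ≠ 0) {x : TiltCarrier K p} (h : x.val 0 = 0) (n : ℕ) :
    x.val n = 0 :=
  (pow_eq_zero_iff (pow_ne_zero n hp)).mp ((x.val_pow n).trans h)

section Existence

variable [Valued K NNReal] [CompleteSpace K]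

local notation "𝒪" => (Valued.v.valuationSubring : ValuationSubring K)

theorem exists_v_val_zero_sub_le (hp : Valued.v (p : K) < 1) (f : ℕ → 𝒪)
    (hf : ∀ n, (p : 𝒪) ∣ f (n + 1) ^ p - f n) :
    ∃ x : TiltCarrier K p, Valued.v (x.val 0 - f 0) ≤ Valued.v (p : K) := by
  set s : ℕ → ℕ → K := fun n m => (f (n + m) : K) ^ p ^ m with hs_def
  have hs : ∀ n m m', m ≤ m' → Valued.v (s n m' - s n m) ≤ Valued.v (p : K) ^ (m + 1) := by
    intro n m m' h
    simpa using (Valuation.valuationSubring.integers Valued.v).le_of_dvd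
      (dvd_pow_pow_sub_pow_pow (f := fun k => f (n + k)) (fun k => hf (n + k)) h)
  have hlim : ∀ n, ∃ L, Tendsto (s n) atTop (𝓝 L) := fun n =>
    cauchySeq_tendsto_of_complete (Valued.cauchySeq_of_v_sub_le
      ((NNReal.tendsto_pow_atTop_nhds_zero_of_lt_one hp).comp (tendsto_add_atTop_nat 1)) (hs n))
  choose L hL using hlim
  have hshift : ∀ n m, s (n + 1) m ^ p = s n (m + 1) := fun n m => by
    rw [hs_def, ← pow_mul, ← pow_succ, Nat.add_right_comm, add_assoc]
  refine ⟨⟨L, fun n => tendsto_nhds_unique (by simpa only [hshift] using (hL (n + 1)).pow p)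
    ((tendsto_add_atTop_iff_nat 1).2 (hL n))⟩, ?_⟩
  have hball : ∀ m, Valued.v (s 0 m - f 0) ≤ Valued.v (p : K) := fun m => by
    simpa [hs_def] using hs 0 0 m m.zero_le
  exact (Valued.isClosed_setOf_v_le _).mem_of_tendsto ((hL 0).sub_const _)
    (Eventually.of_forall hball)

theorem exists_v_val_zero_eq
    (hfrob : ∀ x : 𝒪 ⧸ Ideal.span {(p : 𝒪)}, ∃ y, y ^ p = x) {a : K}
    (hpa : Valued.v (p : K) < Valued.v a) (ha : Valued.v a ≤ 1) :
    ∃ x : TiltCarrier K p, Valued.v (x.val 0) = Valued.v a := by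
  obtain ⟨f, hf0, hf⟩ := exists_seq_dvd_pow_sub hfrob (⟨a, ha⟩ : 𝒪)
  obtain ⟨x, hx⟩ := exists_v_val_zero_sub_le (hpa.trans_le ha) f hf
  rw [hf0] at hx
  exact ⟨x, Valuation.map_eq_of_sub_lt _ (hx.trans_lt hpa)⟩

end Existence

variable [Field (TiltCarrier K p)]

theorem zero_val (hp : p ≠ 0)
    (hmul : ∀ a b : TiltCarrier K p, (a * b).val = fun n => a.val n * b.val n) :
    (0 : TiltCarrier K p).val = 0 := by
  suffices h : (0 : TiltCarrier K p).val 0 = 0 from funext (val_eq_zero hp h)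
  by_contra h
  -- otherwise `x * 0 = 0` forces every coordinate of every `x` to be `1`
  have hcoord : ∀ (x : TiltCarrier K p) n, x.val n = 1 := fun x n => by
    have hz : (0 : TiltCarrier K p).val n ≠ 0 := fun hn =>
      h (by rw [← val_pow, hn, zero_pow (pow_ne_zero n hp)])
    have hx := congrFun (hmul x 0) n
    rw [mul_zero] at hx
    exact (mul_eq_right₀ hz).mp hx.symm
  exact zero_ne_one (α := TiltCarrier K p)
    (Subtype.ext (funext fun n => (hcoord 0 n).trans (hcoord 1 n).symm))

theorem one_val_zero (hp : p ≠ 0)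
    (hmul : ∀ a b : TiltCarrier K p, (a * b).val = fun n => a.val n * b.val n) :
    (1 : TiltCarrier K p).val 0 = 1 := by
  have hne : (1 : TiltCarrier K p).val 0 ≠ 0 := fun h0 => one_ne_zero (α := TiltCarrier K p) <|
    Subtype.ext <| funext fun n => (val_eq_zero hp h0 n).trans (congrFun (zero_val hp hmul) n).symm
  have h := congrFun (hmul 1 1) 0
  rw [one_mul] at h
  exact (mul_eq_left₀ hne).mp h.symm

def sharp (hp : p ≠ 0)
    (hmul : ∀ a b : TiltCarrier K p, (a * b).val = fun n => a.val n * b.val n) :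
    TiltCarrier K p →*₀ K where
  toFun x := x.val 0
  map_zero' := congrFun (zero_val hp hmul) 0
  map_one' := one_val_zero hp hmul
  map_mul' x y := congrFun (hmul x y) 0

variable [Valued K NNReal]

theorem v_add_val_zero_le
    (hadd : ∀ a b : TiltCarrier K p,
      Tendsto (fun m => (a.val m + b.val m) ^ p ^ m) atTop (𝓝 ((a + b).val 0)))
    (x y : TiltCarrier K p) :
    Valued.v ((x + y).val 0) ≤ max (Valued.v (x.val 0)) (Valued.v (y.val 0)) := by
  refine (Valued.isClosed_setOf_v_le _).mem_of_tendsto (hadd x y) (Eventually.of_forall fun m => ?_)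
  calc Valued.v ((x.val m + y.val m) ^ p ^ m) = Valued.v (x.val m + y.val m) ^ p ^ m := map_pow ..
    _ ≤ max (Valued.v (x.val m)) (Valued.v (y.val m)) ^ p ^ m := by
        gcongr; exact Valuation.map_add _ _ _
    _ = max (Valued.v (x.val 0)) (Valued.v (y.val 0)) := by
        rw [(pow_left_mono _).map_max, ← map_pow, ← map_pow, val_pow, val_pow]

noncomputable def sharpValuation (hp : p ≠ 0)
    (hmul : ∀ a b : TiltCarrier K p, (a * b).val = fun n => a.val n * b.val n)
    (hadd : ∀ a b : TiltCarrier K p,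
      Tendsto (fun m => (a.val m + b.val m) ^ p ^ m) atTop (𝓝 ((a + b).val 0))) :
    Valuation (TiltCarrier K p) NNReal where
  __ := (Valued.v : Valuation K NNReal).toMonoidWithZeroHom.comp (sharp hp hmul)
  map_add_le_max' := v_add_val_zero_le hadd

local notation "𝒪" => (Valued.v.valuationSubring : ValuationSubring K)

theorem range_sharpValuation_units [CompleteSpace K] (hp : p ≠ 0)
    (hmul : ∀ a b : TiltCarrier K p, (a * b).val = fun n => a.val n * b.val n)
    (hadd : ∀ a b : TiltCarrier K p,
      Tendsto (fun m => (a.val m + b.val m) ^ p ^ m) atTop (𝓝 ((a + b).val 0)))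
    (hfrob : ∀ x : 𝒪 ⧸ Ideal.span {(p : 𝒪)}, ∃ y, y ^ p = x) {e : K}
    (hpe : Valued.v (p : K) < Valued.v e) (he1 : Valued.v e < 1) :
    (Set.range fun x : (TiltCarrier K p)ˣ => sharpValuation hp hmul hadd x) =
      Set.range fun x : Kˣ => Valued.v (x : K) := by
  set w := sharpValuation hp hmul hadd
  refine Set.Subset.antisymm ?_ ?_
  · rintro _ ⟨u, rfl⟩
    exact ⟨Units.map (sharp hp hmul : TiltCarrier K p →* K) u, rfl⟩
  rintro _ ⟨c, rfl⟩
  have he0 : 0 < Valued.v e := zero_le.trans_lt hpe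
  have hc0 : Valued.v (c : K) ≠ 0 := Valued.v.ne_zero_iff.mpr c.ne_zero
  -- shift `v c` by a power of `v e` into `(v e, 1]`, where `exists_v_val_zero_eq` applies
  obtain ⟨n, hn⟩ := exists_mul_zpow_mem_Ioc he0 he1 (pos_of_ne_zero hc0)
  rw [← map_zpow₀, ← map_mul] at hn
  obtain ⟨x, hx⟩ := exists_v_val_zero_eq hfrob (hpe.trans hn.1) hn.2
  obtain ⟨y, hy⟩ := exists_v_val_zero_eq hfrob hpe he1.le
  have hwx : w x = Valued.v (c : K) * Valued.v e ^ n := by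
    rw [← map_zpow₀, ← map_mul]; exact hx
  have hwy : w y = Valued.v e := hy
  have hx0 : x ≠ 0 :=
    w.ne_zero_iff.mp (by rw [hwx]; exact mul_ne_zero hc0 (zpow_ne_zero _ he0.ne'))
  have hy0 : y ≠ 0 := w.ne_zero_iff.mp (by rw [hwy]; exact he0.ne')
  refine ⟨Units.mk0 (x * y ^ (-n)) (mul_ne_zero hx0 (zpow_ne_zero _ hy0)), ?_⟩
  change w (x * y ^ (-n)) = _
  rw [map_mul, map_zpow₀, hwx, hwy, mul_assoc, zpow_neg,
    mul_inv_cancel₀ (zpow_ne_zero _ he0.ne'), mul_one]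

end TiltCarrier

/-- Let `K` be a perfectoid field of residue characteristic `p`, with tilt `K^♭` and sharp
map `♯ : K^♭ → K`, `(x_n) ↦ x_0`. Then `v^♭(x) := v(x^♯)` defines a valuation on `K^♭`,
and the value group of `v^♭` equals the value group of `v`. -/
theorem sharp_gives_valuation_on_tilt
    (p : ℕ) (hp : p.Prime) (K : Type*) [Field K] [Valued K NNReal] [CompleteSpace K]
    (hdense : Dense (Set.range fun x : Kˣ => Valued.v (x : K)))
    (hchar : CharP (IsLocalRing.ResidueField (Valued.v.valuationSubring : ValuationSubring K)) p)
    (hfrob : ∀ x : (Valued.v.valuationSubring : ValuationSubring K) ⧸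
        (Ideal.span {((p : ℕ) : (Valued.v.valuationSubring : ValuationSubring K))}),
      ∃ y, y ^ p = x)
    (F : Field (TiltCarrier K p)) (hF : TiltFieldSpec K p F) :
    SharpValuationSpec K p F := by
  let := F
  obtain ⟨hmul, hadd, -, -⟩ := hF
  have hadd₀ : ∀ a b : TiltCarrier K p,
      Tendsto (fun m => (a.val m + b.val m) ^ p ^ m) atTop (𝓝 ((a + b).val 0)) := fun a b => by
    simpa only [zero_add] using hadd a b 0
  obtain ⟨_, ⟨e, rfl⟩, hpe, he1⟩ := hdense.exists_mem_open isOpen_Ioo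
    (Set.nonempty_Ioo.mpr (Valued.v_natCast_lt_one (K := K) p))
  exact ⟨TiltCarrier.sharpValuation hp.ne_zero hmul hadd₀, fun _ => rfl,
    TiltCarrier.range_sharpValuation_units hp.ne_zero hmul hadd₀ hfrob hpe he1⟩
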